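/- Let V be a real inner product space of dimension 4n carrying a quaternionic Hermitian structure (J₁,J₂,J₃), and let T be a 3-form on V of type (1,2)+(2,1) with respect to each J_α, α = 1,2,3. Then for every orthonormal basis (e_1,…,e_{4n}) of V and every cyclic permutation (α,β,γ) of (1,2,3): 2·Σ_{i,j,k} T(e_i,e_j,e_k)·T(J_γ e_i, J_β e_j, e_k) = Σ_{i,j,k} T(e_i,e_j,e_k)·( −T(J_α e_i, e_j, e_k) + T(J_α e_i, J_β e_j, J_β e_k) ). -/
import Mathlib


open scoped RealInnerProductSpace

private theorem qkt_aux {V : Type*} [NormedAddCommGroup V] [InnerProductSpace ℝ V]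
    (Ja Jb Jc : V →ₗ[ℝ] V)
    (T : V →ₗ[ℝ] V →ₗ[ℝ] V →ₗ[ℝ] ℝ)
    (halt2 : ∀ x y z : V, T x y z = -T x z y)
    (hbtype : ∀ x y z : V,
      T x y z = T (Jb x) (Jb y) z + T (Jb x) y (Jb z) + T x (Jb y) (Jb z))
    (hba : ∀ x : V, Jb (Ja x) = -(Jc x))
    (m : ℕ) (e : Fin m → V) :
    2 * ∑ i, ∑ j, ∑ k, T (e i) (e j) (e k) * T (Jc (e i)) (Jb (e j)) (e k) =
      ∑ i, ∑ j, ∑ k, T (e i) (e j) (e k) *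
        (-T (Ja (e i)) (e j) (e k) + T (Ja (e i)) (Jb (e j)) (Jb (e k))) := by
  have hkey : ∀ x y z : V,
      T x y z * (-T (Ja x) y z + T (Ja x) (Jb y) (Jb z))
        = T x y z * T (Jc x) (Jb y) z + T x y z * T (Jc x) y (Jb z) := by
    intro x y z
    have h := hbtype (Ja x) y z
    rw [hba x] at h
    simp only [map_neg, LinearMap.neg_apply] at h
    linear_combination (-(T x y z)) * h
  have hswap : ∑ i, ∑ j, ∑ k, T (e i) (e j) (e k) * T (Jc (e i)) (e j) (Jb (e k))
      = ∑ i, ∑ j, ∑ k, T (e i) (e j) (e k) * T (Jc (e i)) (Jb (e j)) (e k) := by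
    refine Finset.sum_congr rfl fun i _ => ?_
    rw [Finset.sum_comm]
    refine Finset.sum_congr rfl fun j _ => Finset.sum_congr rfl fun k _ => ?_
    rw [halt2 (e i) (e k) (e j), halt2 (Jc (e i)) (e k) (Jb (e j))]
    ring
  simp only [hkey, Finset.sum_add_distrib]
  rw [hswap]
  ring

/-- On a `4n`-dimensional real inner product space with a quaternionic
Hermitian structure `(J1, J2, J3)` and a 3-form `T` of type (1,2)+(2,1) with respect to each
`Jα`, for every orthonormal basis and every cyclic permutation `(Ja, Jb, Jc)` of
`(J1, J2, J3)`:
`2 ∑ T(eᵢ,eⱼ,eₖ)·T(Jc eᵢ, Jb eⱼ, eₖ) = ∑ T(eᵢ,eⱼ,eₖ)·(−T(Ja eᵢ, eⱼ, eₖ) + T(Ja eᵢ, Jb eⱼ, Jb eₖ))`. -/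
theorem qkt_lemma_second_identity
    {V : Type*} [NormedAddCommGroup V] [InnerProductSpace ℝ V] [FiniteDimensional ℝ V]
    (n : ℕ) (hdim : Module.finrank ℝ V = 4 * n)
    (J1 J2 J3 : V →ₗ[ℝ] V)
    (horth : ∀ J ∈ ({J1, J2, J3} : Set (V →ₗ[ℝ] V)), ∀ x y : V, ⟪J x, J y⟫ = ⟪x, y⟫)
    (hsq : ∀ J ∈ ({J1, J2, J3} : Set (V →ₗ[ℝ] V)), ∀ x : V, J (J x) = -x)
    (h12 : ∀ x : V, J1 (J2 x) = J3 x)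
    (h21 : ∀ x : V, J2 (J1 x) = -J3 x)
    (T : V →ₗ[ℝ] V →ₗ[ℝ] V →ₗ[ℝ] ℝ)
    (halt1 : ∀ x y z : V, T x y z = -T y x z)
    (halt2 : ∀ x y z : V, T x y z = -T x z y)
    (htype : ∀ J ∈ ({J1, J2, J3} : Set (V →ₗ[ℝ] V)), ∀ x y z : V,
      T x y z = T (J x) (J y) z + T (J x) y (J z) + T x (J y) (J z))
    (e : OrthonormalBasis (Fin (4 * n)) ℝ V) :
    ∀ Ja Jb Jc : V →ₗ[ℝ] V,
      ((Ja, Jb, Jc) = (J1, J2, J3) ∨ (Ja, Jb, Jc) = (J2, J3, J1) ∨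
        (Ja, Jb, Jc) = (J3, J1, J2)) →
      2 * ∑ i, ∑ j, ∑ k, T (e i) (e j) (e k) * T (Jc (e i)) (Jb (e j)) (e k) =
        ∑ i, ∑ j, ∑ k, T (e i) (e j) (e k) *
          (-T (Ja (e i)) (e j) (e k) + T (Ja (e i)) (Jb (e j)) (Jb (e k))) := by
  intro Ja Jb Jc hcyc
  have hm1 : J1 ∈ ({J1, J2, J3} : Set (V →ₗ[ℝ] V)) := by simp
  have hm2 : J2 ∈ ({J1, J2, J3} : Set (V →ₗ[ℝ] V)) := by simp
  have hm3 : J3 ∈ ({J1, J2, J3} : Set (V →ₗ[ℝ] V)) := by simp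
  rcases hcyc with h | h | h <;>
    simp only [Prod.mk.injEq] at h <;> obtain ⟨rfl, rfl, rfl⟩ := h
  · exact qkt_aux Ja Jb Jc T halt2 (htype Jb hm2)
      (fun x => by rw [h21 x]) _ (fun i => e i)
  · refine qkt_aux Ja Jb Jc T halt2 (htype Jb hm3) (fun x => ?_) _ (fun i => e i)
    rw [← h12 (Ja x), hsq Ja hm2, map_neg]
  · refine qkt_aux Ja Jb Jc T halt2 (htype Jb hm1) (fun x => ?_) _ (fun i => e i)
    rw [← h12 x]
    exact hsq Jb hm1 (Jc x)
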